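/- arXiv:2302.02118 — 3 statements merged into one kernel-verified Lean document; each statement's English description precedes it below -/
import Mathlib

section
/- Suppose n > 3f. If in view v two replicas each receive n - f Sync messages, all from distinct senders, each claiming the same proposal P1 (respectively P2), and each non-faulty replica sends at most one Sync claim per view, then P1 = P2. -/
/-- Uniqueness of synced proposals (PVP Theorem 3.1): with `n > 3f` replicas,
at most `f` of which are faulty, if each non-faulty replica sends the same
Sync claim to every receiver (at most one claim per view), and two receivers
each collect `n - f` claims from distinct senders all equal to `P1`
(resp. `P2`), then `P1 = P2`. -/
theorem sync_claim_unique
    {R : Type*} [Fintype R] [DecidableEq R] {Proposal : Type*}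
    (n f : ℕ) (hcard : Fintype.card R = n) (hnf : n > 3 * f)
    (F : Finset R) (hF : F.card ≤ f)
    (claim : R → R → Option Proposal)
    (hhonest : ∀ s, s ∉ F → ∀ r1 r2, claim s r1 = claim s r2)
    (recv1 recv2 : R) (P1 P2 : Proposal)
    (Q1 Q2 : Finset R) (hQ1 : Q1.card = n - f) (hQ2 : Q2.card = n - f)
    (hclaim1 : ∀ q ∈ Q1, claim q recv1 = some P1)
    (hclaim2 : ∀ q ∈ Q2, claim q recv2 = some P2) :
    P1 = P2 := by
  have hunion : (Q1 ∪ Q2).card ≤ n := hcard ▸ Finset.card_le_univ _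
  have hint : f < (Q1 ∩ Q2).card := by
    have := Finset.card_union_add_card_inter Q1 Q2
    omega
  have : ¬ (Q1 ∩ Q2 ⊆ F) := fun h => absurd (Finset.card_le_card h) (by omega)
  obtain ⟨q, hq, hqF⟩ := Finset.not_subset.mp this
  have h1 := hclaim1 q (Finset.mem_inter.mp hq).1
  have h2 := hclaim2 q (Finset.mem_inter.mp hq).2
  have := hhonest q hqF recv1 recv2
  rw [h1, h2] at this
  exact Option.some.inj this
end

section
/- If each proposal has a unique immediate predecessor and views strictly increase along the predecessor chain, then two proposals with the same view that are both in the predecessor-closure of a common proposal are equal. -/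
private lemma view_lt_of_tg {Proposal : Type*} (pred : Proposal → Option Proposal)
    (view : Proposal → ℕ) (hview : ∀ p q, pred q = some p → view p < view q)
    {a b : Proposal} (h : Relation.TransGen (fun x y => pred y = some x) a b) :
    view a < view b := by
  induction h with
  | single h => exact hview _ _ h
  | tail _ h ih => exact ih.trans (hview _ _ h)

private lemma comparable_of_tg {Proposal : Type*} (pred : Proposal → Option Proposal)
    (view : Proposal → ℕ) (hview : ∀ p q, pred q = some p → view p < view q) :
    ∀ m a b, Relation.TransGen (fun x y => pred y = some x) a m →
      Relation.TransGen (fun x y => pred y = some x) b m →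
      a = b ∨ Relation.TransGen (fun x y => pred y = some x) a b ∨
        Relation.TransGen (fun x y => pred y = some x) b a := by
  suffices h : ∀ n m, view m = n → ∀ a b,
      Relation.TransGen (fun x y => pred y = some x) a m →
      Relation.TransGen (fun x y => pred y = some x) b m →
      a = b ∨ Relation.TransGen (fun x y => pred y = some x) a b ∨
        Relation.TransGen (fun x y => pred y = some x) b a by
    intro m; exact h (view m) m rfl
  intro n
  induction n using Nat.strong_induction_on with
  | _ n ih =>
  intro m hvm a b ha hb
  subst hvm
  obtain ⟨c, hac, hc⟩ := Relation.TransGen.tail'_iff.mp ha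
  obtain ⟨c', hbc, hc'⟩ := Relation.TransGen.tail'_iff.mp hb
  rw [hc'] at hc
  obtain rfl : c' = c := Option.some.inj hc
  rcases Relation.reflTransGen_iff_eq_or_transGen.mp hac with rfl | hac <;>
    rcases Relation.reflTransGen_iff_eq_or_transGen.mp hbc with rfl | hbc
  · left; rfl
  · right; right; exact hbc
  · right; left; exact hac
  · exact ih _ (hview _ _ hc') _ rfl a b hac hbc

/-- If each proposal has a unique immediate predecessor and views strictly
increase along the predecessor chain, then two proposals with the same view
both lying in the predecessor-closure of a common proposal `m`
(i.e. in `Prec(m) ∪ {m}`) are equal. -/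
theorem same_view_in_closure_eq
    {Proposal : Type*} (pred : Proposal → Option Proposal) (view : Proposal → ℕ)
    (hview : ∀ p q, pred q = some p → view p < view q)
    (precedes : Proposal → Proposal → Prop)
    (hprec : ∀ p q, precedes p q ↔ Relation.TransGen (fun x y => pred y = some x) p q)
    (m p1 p2 : Proposal)
    (h1 : precedes p1 m ∨ p1 = m) (h2 : precedes p2 m ∨ p2 = m)
    (hv : view p1 = view p2) :
    p1 = p2 := by
  rcases h1 with h1 | rfl <;> rcases h2 with h2 | rfl
  · rw [hprec] at h1 h2
    rcases comparable_of_tg pred view hview m p1 p2 h1 h2 with h | h | h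
    · exact h
    · exact absurd hv (Nat.ne_of_lt (view_lt_of_tg pred view hview h))
    · exact absurd hv.symm (Nat.ne_of_lt (view_lt_of_tg pred view hview h))
  · rw [hprec] at h1
    exact absurd hv (Nat.ne_of_lt (view_lt_of_tg pred view hview h1))
  · rw [hprec] at h2
    exact absurd hv.symm (Nat.ne_of_lt (view_lt_of_tg pred view hview h2))
  · rfl
end

section
/- Two proposals are called conflicting if neither precedes the other and they are distinct. In a chain structure where pred is a function (unique immediate predecessor), if P1 and P2 both precede m (or equal m), then P1 and P2 are not conflicting. -/
lemma trans_comparable {Proposal : Type*} (pred : Proposal → Option Proposal)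
    {m a b : Proposal}
    (h1 : Relation.TransGen (fun x y => pred y = some x) a m) :
    Relation.TransGen (fun x y => pred y = some x) b m →
    a = b ∨ Relation.TransGen (fun x y => pred y = some x) a b ∨
      Relation.TransGen (fun x y => pred y = some x) b a := by
  induction h1 with
  | single h =>
    intro h2
    cases h2 with
    | single h' =>
      left
      have := h.symm.trans h'
      exact (Option.some_injective _ this)
    | tail hbd hdm =>
      have : _ = a := Option.some_injective _ (hdm.symm.trans h)
      right; right; exact this ▸ hbd
  | tail h1' h ih =>
    intro h2
    cases h2 with
    | single h' =>
      have : b = _ := Option.some_injective _ (h'.symm.trans h)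
      right; left; exact this ▸ h1'
    | tail hbd hdm =>
      have : _ = _ := Option.some_injective _ (hdm.symm.trans h)
      exact ih (this ▸ hbd)

/-- Two proposals are conflicting if they are distinct and neither precedes
the other. If `P1` and `P2` both lie in the closure `{m} ∪ Prec(m)` of a
proposal `m` in a chain structure (unique immediate predecessors), then
`P1` and `P2` are not conflicting. -/
theorem closure_not_conflicting
    {Proposal : Type*} (pred : Proposal → Option Proposal)
    (precedes : Proposal → Proposal → Prop)
    (hprec : ∀ p q, precedes p q ↔ Relation.TransGen (fun x y => pred y = some x) p q)
    (conflicting : Proposal → Proposal → Prop)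
    (hconf : ∀ p q, conflicting p q ↔ p ≠ q ∧ ¬ precedes p q ∧ ¬ precedes q p)
    (m P1 P2 : Proposal)
    (h1 : precedes P1 m ∨ P1 = m) (h2 : precedes P2 m ∨ P2 = m) :
    ¬ conflicting P1 P2 := by
  rw [hconf]
  rintro ⟨hne, hn12, hn21⟩
  rw [hprec] at hn12 hn21
  rcases h1 with h1 | rfl
  · rcases h2 with h2 | rfl
    · rcases trans_comparable pred ((hprec _ _).mp h1) ((hprec _ _).mp h2) with
        rfl | h | h
      · exact hne rfl
      · exact hn12 h
      · exact hn21 h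
    · exact hn12 ((hprec _ _).mp h1)
  · rcases h2 with h2 | rfl
    · exact hn21 ((hprec _ _).mp h2)
    · exact hne rfl
end
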